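/- arXiv:2304.06528 — 4 statements merged into one kernel-verified Lean document; each statement's English description precedes it below -/
import Mathlib

section
/- Let S be a finite type and let the symmetric group Perm(S) act on reward vectors θ : S → ℝ by (σ · θ) = θ ∘ σ⁻¹. Let Θ be a set of reward vectors and let p₀, p₁ : (S → ℝ) → ℝ be arbitrary functions (the probabilities that the decision-maker chooses action set A₀ resp. A₁). Fix θ ∈ Θ and let Orbit_Θ(θ) := {θ' ∈ Θ | ∃ σ ∈ Perm(S), θ' = σ · θ}, and write O₊ := {θ' ∈ Orbit_Θ(θ) | p₁(θ') > p₀(θ')} and O₋ := {θ' ∈ Orbit_Θ(θ) | p₀(θ') > p₁(θ')}. Suppose there exists a finite set Φ of permutations of S with |Φ| = n such that: (1) for every φ ∈ Φ and every θ' ∈ O₋, p₁(φ · θ') > p₀(φ · θ'); (2) for every φ ∈ Φ and every θ' ∈ O₋, φ · θ' ∈ Θ; (3) for all distinct φ', φ'' ∈ Φ and all θ', θ'' ∈ O₋, φ' · θ' ≠ φ'' · θ''. Then |O₊| ≥ n · |O₋| (cardinalities are finite since the orbit of θ under the finite group Perm(S) is finite). -/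
/-
Each retargeting permutation φ ∈ Φ maps O₋ injectively into O₊ (it stays in the orbit and in Θ,
and it flips the preference), and by (3) the images of O₋ under distinct φ are disjoint. Hence the
map (φ, θ') ↦ φ · θ' is injective from Φ × O₋ into O₊, which is finite because the orbit of θ
under the finite group Perm(S) is.
-/

/-- The action of a permutation `σ` of states on a reward vector `θ : S → ℝ`,
given by `(σ · θ) s = θ (σ⁻¹ s)`. -/
def permAct {S : Type*} (σ : Equiv.Perm S) (θ : S → ℝ) : S → ℝ := θ ∘ ⇑σ⁻¹

/-- The orbit of `θ` inside `Θ`: all permuted copies of `θ` lying in `Θ`. -/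
def orbitIn {S : Type*} (Θ : Set (S → ℝ)) (θ : S → ℝ) : Set (S → ℝ) :=
  {θ' ∈ Θ | ∃ σ : Equiv.Perm S, θ' = permAct σ θ}

/-- The subset of the orbit of `θ` inside `Θ` on which `pA` strictly exceeds `pB`. -/
def orbitPref {S : Type*} (Θ : Set (S → ℝ)) (pA pB : (S → ℝ) → ℝ) (θ : S → ℝ) :
    Set (S → ℝ) :=
  {θ' ∈ orbitIn Θ θ | pA θ' > pB θ'}

theorem Set.ncard_mul_ncard_le_of_injOn_of_disjoint {ι α β : Type*} {s : Set ι} {t : Set α}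
    {u : Set β} (f : ι → α → β) (hmaps : ∀ i ∈ s, ∀ a ∈ t, f i a ∈ u)
    (hinj : ∀ i ∈ s, Set.InjOn (f i) t)
    (hdisj : ∀ i ∈ s, ∀ j ∈ s, i ≠ j → ∀ a ∈ t, ∀ b ∈ t, f i a ≠ f j b) (hu : u.Finite) :
    s.ncard * t.ncard ≤ u.ncard := by
  rw [← Set.ncard_prod]
  refine Set.ncard_le_ncard_of_injOn (Function.uncurry f)
    (fun p hp => hmaps p.1 hp.1 p.2 hp.2) ?_ hu
  rintro ⟨i, a⟩ ⟨hi, ha⟩ ⟨j, b⟩ ⟨hj, hb⟩ hfab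
  obtain rfl : i = j := by_contra fun hij => hdisj i hi j hj hij a ha b hb hfab
  exact Prod.ext rfl (hinj i hi ha hb hfab)

section permAct

variable {S : Type*}

theorem permAct_mul (σ τ : Equiv.Perm S) (θ : S → ℝ) :
    permAct σ (permAct τ θ) = permAct (σ * τ) θ := by
  funext s
  simp [permAct, mul_inv_rev]

theorem permAct_injective (σ : Equiv.Perm S) : Function.Injective (permAct σ) := by
  intro x y h
  funext s
  simpa [permAct] using congrFun h (σ s)

theorem orbitIn_finite [Finite S] (Θ : Set (S → ℝ)) (θ : S → ℝ) : (orbitIn Θ θ).Finite :=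
  (Set.finite_range fun σ : Equiv.Perm S => permAct σ θ).subset
    fun _ ⟨_, σ, hσ⟩ => ⟨σ, hσ.symm⟩

theorem permAct_mem_orbitIn {Θ : Set (S → ℝ)} {θ θ' : S → ℝ} (φ : Equiv.Perm S)
    (hθ' : θ' ∈ orbitIn Θ θ) (hΘ : permAct φ θ' ∈ Θ) : permAct φ θ' ∈ orbitIn Θ θ := by
  obtain ⟨-, σ, rfl⟩ := hθ'
  exact ⟨hΘ, φ * σ, permAct_mul φ σ θ⟩

end permAct

theorem retargetable_prefers_A1_general {S : Type*} [Fintype S]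
    (Θ : Set (S → ℝ)) (p₀ p₁ : (S → ℝ) → ℝ) (θ : S → ℝ)
    (n : ℕ) (Φ : Finset (Equiv.Perm S)) (hΦ : Φ.card = n)
    (h1 : ∀ φ ∈ Φ, ∀ θ' ∈ orbitPref Θ p₀ p₁ θ,
      p₁ (permAct φ θ') > p₀ (permAct φ θ'))
    (h2 : ∀ φ ∈ Φ, ∀ θ' ∈ orbitPref Θ p₀ p₁ θ, permAct φ θ' ∈ Θ)
    (h3 : ∀ φ' ∈ Φ, ∀ φ'' ∈ Φ, φ' ≠ φ'' →
      ∀ θ' ∈ orbitPref Θ p₀ p₁ θ, ∀ θ'' ∈ orbitPref Θ p₀ p₁ θ,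
        permAct φ' θ' ≠ permAct φ'' θ'') :
    (orbitPref Θ p₁ p₀ θ).ncard ≥ n * (orbitPref Θ p₀ p₁ θ).ncard := by
  have hmaps : ∀ φ ∈ (Φ : Set (Equiv.Perm S)), ∀ θ' ∈ orbitPref Θ p₀ p₁ θ,
      permAct φ θ' ∈ orbitPref Θ p₁ p₀ θ := fun φ hφ θ' hθ' =>
    ⟨permAct_mem_orbitIn φ hθ'.1 (h2 φ hφ θ' hθ'), h1 φ hφ θ' hθ'⟩
  have hfin : (orbitPref Θ p₁ p₀ θ).Finite := (orbitIn_finite Θ θ).subset fun _ h => h.1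
  rw [← hΦ, ← Set.ncard_coe_finset]
  exact Set.ncard_mul_ncard_le_of_injOn_of_disjoint permAct hmaps
    (fun φ _ => (permAct_injective φ).injOn) h3 hfin

/-- Multiply retargetable functions prefer action set `A₁` (RDSP Theorem 3.6):
given `n` retargeting permutations, the orbit subset preferring `A₁` is at least
`n` times as large as the orbit subset preferring `A₀`. -/
theorem retargetable_prefers_A1 {S : Type*} [Fintype S]
    (Θ : Set (S → ℝ)) (p₀ p₁ : (S → ℝ) → ℝ) (θ : S → ℝ) (hθ : θ ∈ Θ)
    (n : ℕ) (Φ : Finset (Equiv.Perm S)) (hΦ : Φ.card = n)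
    (h1 : ∀ φ ∈ Φ, ∀ θ' ∈ orbitPref Θ p₀ p₁ θ,
      p₁ (permAct φ θ') > p₀ (permAct φ θ'))
    (h2 : ∀ φ ∈ Φ, ∀ θ' ∈ orbitPref Θ p₀ p₁ θ, permAct φ θ' ∈ Θ)
    (h3 : ∀ φ' ∈ Φ, ∀ φ'' ∈ Φ, φ' ≠ φ'' →
      ∀ θ' ∈ orbitPref Θ p₀ p₁ θ, ∀ θ'' ∈ orbitPref Θ p₀ p₁ θ,
        permAct φ' θ' ≠ permAct φ'' θ'') :
    (orbitPref Θ p₁ p₀ θ).ncard ≥ n * (orbitPref Θ p₀ p₁ θ).ncard :=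
  retargetable_prefers_A1_general Θ p₀ p₁ θ n Φ hΦ h1 h2 h3
end

section
/- Let (Ω, 𝓕, μ) be a probability space, S a type, s_rec ∈ S, and let (X_t)_{t ≥ 1} be a sequence of functions X : ℕ → Ω → S such that for each t the set {ω | X t ω = s_rec} is measurable. Suppose that for μ-almost every ω the set {t ≥ 1 | X t ω = s_rec} is infinite. Define the expected discounted visit count V(γ) := ∫⁻ ω, ∑'_{t ≥ 1} ENNReal.ofReal(γ^(t−1)) · 1{X t ω = s_rec} dμ ∈ ℝ≥0∞. Then V(γ) tends to ∞ as γ → 1 from the left (i.e., along the filter 𝓝[<] 1, V(γ) → ⊤ in ℝ≥0∞). -/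
open MeasureTheory Filter
open scoped ENNReal

/-- Visit count goes to infinity: if the process `(X_t)_{t ≥ 1}` almost surely visits
`s_rec` infinitely often, then the expected discounted visit count
`V(γ) = ∫⁻ ω, ∑'_{t ≥ 1} γ^(t-1) · 1{X_t ω = s_rec} dμ` tends to `∞` as `γ → 1⁻`. -/
theorem discounted_visit_count_tendsto_top {Ω : Type*} [MeasurableSpace Ω]
    (μ : Measure Ω) [IsProbabilityMeasure μ] {S : Type*} (s_rec : S)
    (X : ℕ → Ω → S)
    (hmeas : ∀ t : ℕ, MeasurableSet {ω | X t ω = s_rec})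
    (hinf : ∀ᵐ ω ∂μ, {t : ℕ | 1 ≤ t ∧ X t ω = s_rec}.Infinite) :
    Tendsto
      (fun γ : ℝ =>
        ∫⁻ ω, ∑' t : ℕ, ENNReal.ofReal (γ ^ t) *
          ({ω' | X (t + 1) ω' = s_rec}).indicator 1 ω ∂μ)
      (nhdsWithin 1 (Set.Iio 1)) (nhds ⊤) := by
  set d : ℕ → Ω → ℝ≥0∞ := fun t ω => ({ω' | X (t + 1) ω' = s_rec}).indicator 1 ω with hd
  set V : ℝ → ℝ≥0∞ := fun γ => ∫⁻ ω, ∑' t : ℕ, ENNReal.ofReal (γ ^ t) * d t ω ∂μ with hV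
  have hd_le_one : ∀ t ω, d t ω ≤ 1 := by
    intro t ω
    simp only [hd, Set.indicator]
    split <;> simp
  -- monotonicity of V
  have hVmono : ∀ a b : ℝ, 0 ≤ a → a ≤ b → V a ≤ V b := by
    intro a b ha hab
    refine lintegral_mono fun ω => ENNReal.tsum_le_tsum fun t => ?_
    exact mul_le_mul_left (ENNReal.ofReal_le_ofReal (pow_le_pow_left₀ ha hab t)) _
  -- the sequence γ_j = 1 - 1/(j+1)
  set g : ℕ → ℝ := fun j => 1 - 1 / (j + 1) with hg
  have hg_nonneg : ∀ j, 0 ≤ g j := by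
    intro j
    have h1 : (1 : ℝ) / (j + 1) ≤ 1 := by
      rw [div_le_one (by positivity)]
      linarith [Nat.cast_nonneg (α := ℝ) j]
    simp only [hg]; linarith
  have hg_lt_one : ∀ j, g j < 1 := by
    intro j
    have : (0 : ℝ) < 1 / (j + 1) := by positivity
    simp only [hg]; linarith
  have hg_mono : Monotone g := by
    intro i j hij
    have : (1 : ℝ) / (j + 1) ≤ 1 / (i + 1) := by
      apply one_div_le_one_div_of_le (by positivity)
      have : (i : ℝ) ≤ j := Nat.cast_le.mpr hij
      linarith
    simp only [hg]; linarith
  have hg_tendsto : Tendsto g atTop (nhds 1) := by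
    have h0 : Tendsto (fun j : ℕ => 1 / (j + 1 : ℝ)) atTop (nhds 0) :=
      tendsto_one_div_add_atTop_nhds_zero_nat
    simpa [hg, one_div] using h0.const_sub (1 : ℝ)
  -- measurability
  have hdmeas : ∀ t, Measurable (d t) := fun t =>
    (measurable_const (a := (1 : ℝ≥0∞))).indicator (hmeas (t + 1))
  -- a.e. the undiscounted visit count is ⊤
  have hae : ∀ᵐ ω ∂μ, (∑' t : ℕ, d t ω) = ⊤ := by
    filter_upwards [hinf] with ω hω
    have hAinf : {t : ℕ | X (t + 1) ω = s_rec}.Infinite := by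
      have hsub : (fun t => t - 1) '' {t : ℕ | 1 ≤ t ∧ X t ω = s_rec}
          ⊆ {t : ℕ | X (t + 1) ω = s_rec} := by
        rintro u ⟨t, ⟨ht1, ht2⟩, rfl⟩
        have : t - 1 + 1 = t := by omega
        simpa [Set.mem_setOf_eq, this] using ht2
      refine Set.Infinite.mono hsub (Set.Infinite.image ?_ hω)
      intro a ha b hb hab
      have h1 := ha.1; have h2 := hb.1
      simp only [] at hab; omega
    have heq : (fun t => d t ω) =
        ({t : ℕ | X (t + 1) ω = s_rec}).indicator (fun _ => (1 : ℝ≥0∞)) := by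
      funext t
      by_cases h : X (t + 1) ω = s_rec <;> simp [hd, Set.indicator, h]
    rw [heq, ← tsum_subtype]
    haveI : Infinite ({t : ℕ | X (t + 1) ω = s_rec}) := hAinf.to_subtype
    exact ENNReal.tsum_const_eq_top_of_ne_zero one_ne_zero
  -- V along the sequence tends to ⊤
  have hseq : Tendsto (fun j => V (g j)) atTop (nhds ⊤) := by
    have key : Tendsto (fun j => V (g j)) atTop (nhds (∫⁻ ω, ∑' t : ℕ, d t ω ∂μ)) := by
      apply lintegral_tendsto_of_tendsto_of_monotone
      · intro j
        exact (Measurable.ennreal_tsum fun t =>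
          measurable_const.mul (hdmeas t)).aemeasurable
      · refine Eventually.of_forall fun ω => ?_
        intro i j hij
        exact ENNReal.tsum_le_tsum fun t =>
          mul_le_mul_left (ENNReal.ofReal_le_ofReal
            (pow_le_pow_left₀ (hg_nonneg i) (hg_mono hij) t)) _
      · refine Eventually.of_forall fun ω => ?_
        -- pointwise monotone convergence of the tsum
        have := lintegral_tendsto_of_tendsto_of_monotone
          (μ := Measure.count) (f := fun j t => ENNReal.ofReal (g j ^ t) * d t ω)
          (F := fun t => d t ω)
          (fun j => (measurable_from_top (f := fun t => ENNReal.ofReal (g j ^ t) * d t ω)).aemeasurable)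
          ?_ ?_
        · simpa [lintegral_count] using this
        · refine Eventually.of_forall fun t => ?_
          intro i j hij
          exact mul_le_mul_left (ENNReal.ofReal_le_ofReal
            (pow_le_pow_left₀ (hg_nonneg i) (hg_mono hij) t)) _
        · refine Eventually.of_forall fun t => ?_
          have h1 : Tendsto (fun j => ENNReal.ofReal (g j ^ t)) atTop (nhds 1) := by
            have : Tendsto (fun j => g j ^ t) atTop (nhds 1) := by
              simpa using (hg_tendsto.pow t)
            simpa [Function.comp_def] using (ENNReal.continuous_ofReal.tendsto 1).comp this
          have := ENNReal.Tendsto.mul_const h1 (b := d t ω)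
            (Or.inr (ne_top_of_le_ne_top ENNReal.one_ne_top (hd_le_one t ω)))
          simpa using this
    have hFtop : (∫⁻ ω, ∑' t : ℕ, d t ω ∂μ) = ⊤ := by
      rw [lintegral_congr_ae (hae.mono fun ω h => h)]
      simp
    rwa [hFtop] at key
  -- conclude
  rw [ENNReal.tendsto_nhds_top_iff_nat]
  intro n
  obtain ⟨j, hj⟩ := (ENNReal.tendsto_nhds_top_iff_nat.mp hseq n).exists
  filter_upwards [Ioo_mem_nhdsLT (hg_lt_one j)] with γ hγ
  exact lt_of_lt_of_le hj (hVmono (g j) γ (hg_nonneg j) (le_of_lt hγ.1))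
end

section
/- Let (Ω, 𝓕, μ) be a probability space, S a type, s_rec ∈ S, and let (X_t)_{t ≥ 1} be a sequence of functions X : ℕ → Ω → S such that for each t the set {ω | X t ω = s_rec} is measurable, and for μ-almost every ω the set {t ≥ 1 | X t ω = s_rec} is infinite. Define V(γ) := ∫⁻ ω, ∑'_{t ≥ 1} ENNReal.ofReal(γ^(t−1)) · 1{X t ω = s_rec} dμ. Then there exists γ* ∈ [0, 1) such that for every γ with γ* < γ < 1 one has V(γ) > 1. -/
open MeasureTheory
open scoped ENNReal NNReal

/-- Existence of a discount threshold: if the process `(X_t)_{t ≥ 1}` almost surely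
visits `s_rec` infinitely often, then there is `γ* ∈ [0, 1)` such that for all
`γ* < γ < 1` the expected discounted visit count exceeds `1`. -/
theorem exists_discount_threshold {Ω : Type*} [MeasurableSpace Ω]
    (μ : Measure Ω) [IsProbabilityMeasure μ] {S : Type*} (s_rec : S)
    (X : ℕ → Ω → S)
    (hmeas : ∀ t : ℕ, MeasurableSet {ω | X t ω = s_rec})
    (hinf : ∀ᵐ ω ∂μ, {t : ℕ | 1 ≤ t ∧ X t ω = s_rec}.Infinite) :
    ∃ γstar : ℝ, 0 ≤ γstar ∧ γstar < 1 ∧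
      ∀ γ : ℝ, γstar < γ → γ < 1 →
        1 < ∫⁻ ω, ∑' t : ℕ, ENNReal.ofReal (γ ^ t) *
          ({ω' | X (t + 1) ω' = s_rec}).indicator 1 ω ∂μ := by
  classical
  set C : ℕ → Ω → ℕ := fun N ω =>
    ((Finset.range N).filter (fun t => X (t + 1) ω = s_rec)).card with hCdef
  have hCeq : ∀ N ω, C N ω = ∑ t ∈ Finset.range N, if X (t + 1) ω = s_rec then 1 else 0 := by
    intro N ω; rw [hCdef]; exact Finset.card_filter _ _
  have hCmeas : ∀ N, Measurable (C N) := by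
    intro N
    have : C N = fun ω => ∑ t ∈ Finset.range N, if X (t + 1) ω = s_rec then 1 else 0 := by
      funext ω; exact hCeq N ω
    rw [this]
    exact Finset.measurable_sum _ fun t _ =>
      Measurable.ite (hmeas (t + 1)) measurable_const measurable_const
  set A : ℕ → Set Ω := fun N => {ω | 2 ≤ C N ω} with hAdef
  have hAmeas : ∀ N, MeasurableSet (A N) := fun N => (hCmeas N) measurableSet_Ici
  have hAmono : Monotone A := by
    intro N M hNM ω hω
    refine le_trans hω (Finset.card_le_card ?_)
    exact Finset.filter_subset_filter _ (Finset.range_subset_range.2 hNM)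
  -- a.e. ω belongs to the union of the A N
  have hae : ∀ᵐ ω ∂μ, ω ∈ ⋃ N, A N := by
    filter_upwards [hinf] with ω hω
    obtain ⟨a, ha, b, hb, hab⟩ := hω.nontrivial
    obtain ⟨ha1, haX⟩ := ha
    obtain ⟨hb1, hbX⟩ := hb
    refine Set.mem_iUnion.2 ⟨max a b, ?_⟩
    have hamem : a - 1 ∈ (Finset.range (max a b)).filter (fun t => X (t + 1) ω = s_rec) := by
      simp only [Finset.mem_filter, Finset.mem_range]
      constructor
      · omega
      · rw [Nat.sub_add_cancel ha1]; exact haX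
    have hbmem : b - 1 ∈ (Finset.range (max a b)).filter (fun t => X (t + 1) ω = s_rec) := by
      simp only [Finset.mem_filter, Finset.mem_range]
      constructor
      · omega
      · rw [Nat.sub_add_cancel hb1]; exact hbX
    have : 1 < ((Finset.range (max a b)).filter (fun t => X (t + 1) ω = s_rec)).card :=
      Finset.one_lt_card.2 ⟨a - 1, hamem, b - 1, hbmem, by omega⟩
    exact this
  have hUnion : μ (⋃ N, A N) = 1 := by
    refine le_antisymm prob_le_one ?_
    have : μ Set.univ ≤ μ (⋃ N, A N) := by
      refine measure_mono_ae ?_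
      filter_upwards [hae] with ω hω _
      exact hω
    simpa using this
  have hSup : (⨆ N, μ (A N)) = 1 := by
    rw [← (hAmono.directed_le).measure_iUnion]; exact hUnion
  have : ENNReal.ofReal (3 / 4) < ⨆ N, μ (A N) := by
    rw [hSup]; exact ENNReal.ofReal_lt_one.2 (by norm_num)
  obtain ⟨N, hμN⟩ := lt_iSup_iff.1 this
  have hN0 : N ≠ 0 := by
    rintro rfl
    have : A 0 = ∅ := by
      ext ω; simp [hAdef, hCdef]
    rw [this] at hμN
    simp at hμN
  refine ⟨(2 / 3 : ℝ) ^ ((N : ℝ)⁻¹), Real.rpow_nonneg (by norm_num) _,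
    Real.rpow_lt_one (by norm_num) (by norm_num)
      (by positivity), ?_⟩
  intro γ hγ1 hγ2
  have hγstar_pos : (0 : ℝ) < (2 / 3 : ℝ) ^ ((N : ℝ)⁻¹) :=
    Real.rpow_pos_of_pos (by norm_num) _
  have hγpos : 0 < γ := lt_trans hγstar_pos hγ1
  have hkey : ((2 / 3 : ℝ) ^ ((N : ℝ)⁻¹)) ^ N = 2 / 3 := by
    rw [← Real.rpow_natCast ((2 / 3 : ℝ) ^ ((N : ℝ)⁻¹)) N, ← Real.rpow_mul (by norm_num),
      inv_mul_cancel₀ (Nat.cast_ne_zero.2 hN0), Real.rpow_one]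
  have h23 : (2 / 3 : ℝ) ≤ γ ^ N := by
    rw [← hkey]
    exact pow_le_pow_left₀ hγstar_pos.le hγ1.le N
  -- pointwise bound
  have hpt : ∀ ω, ENNReal.ofReal (γ ^ N) * (C N ω : ℝ≥0∞) ≤
      ∑' t : ℕ, ENNReal.ofReal (γ ^ t) * ({ω' | X (t + 1) ω' = s_rec}).indicator 1 ω := by
    intro ω
    have hsum : ∑ t ∈ Finset.range N,
        ({ω' | X (t + 1) ω' = s_rec}).indicator (1 : Ω → ℝ≥0∞) ω = (C N ω : ℝ≥0∞) := by
      rw [hCeq N ω]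
      push_cast
      refine Finset.sum_congr rfl fun t _ => ?_
      simp [Set.indicator_apply]
    calc ENNReal.ofReal (γ ^ N) * (C N ω : ℝ≥0∞)
        = ∑ t ∈ Finset.range N, ENNReal.ofReal (γ ^ N) *
            ({ω' | X (t + 1) ω' = s_rec}).indicator 1 ω := by
          rw [← Finset.mul_sum, hsum]
      _ ≤ ∑ t ∈ Finset.range N, ENNReal.ofReal (γ ^ t) *
            ({ω' | X (t + 1) ω' = s_rec}).indicator 1 ω := by
          refine Finset.sum_le_sum fun t ht => ?_
          refine mul_le_mul_left (ENNReal.ofReal_le_ofReal ?_) _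
          exact pow_le_pow_of_le_one hγpos.le hγ2.le (le_of_lt (Finset.mem_range.1 ht))
      _ ≤ ∑' t : ℕ, ENNReal.ofReal (γ ^ t) *
            ({ω' | X (t + 1) ω' = s_rec}).indicator 1 ω := ENNReal.sum_le_tsum _
  have hCcast_meas : Measurable fun ω => (C N ω : ℝ≥0∞) :=
    (measurable_from_top).comp (hCmeas N)
  have hmark : 2 * μ (A N) ≤ ∫⁻ ω, (C N ω : ℝ≥0∞) ∂μ := by
    have h := mul_meas_ge_le_lintegral₀ (μ := μ) hCcast_meas.aemeasurable 2
    have hset : {x | (2 : ℝ≥0∞) ≤ (C N x : ℝ≥0∞)} = A N := by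
      ext ω
      simp only [Set.mem_setOf_eq, hAdef]
      exact_mod_cast Iff.rfl
    rwa [hset] at h
  have hint : ENNReal.ofReal (γ ^ N) * (2 * μ (A N)) ≤
      ∫⁻ ω, ∑' t : ℕ, ENNReal.ofReal (γ ^ t) *
        ({ω' | X (t + 1) ω' = s_rec}).indicator 1 ω ∂μ := by
    calc ENNReal.ofReal (γ ^ N) * (2 * μ (A N))
        ≤ ENNReal.ofReal (γ ^ N) * ∫⁻ ω, (C N ω : ℝ≥0∞) ∂μ := mul_le_mul_right hmark _
      _ = ∫⁻ ω, ENNReal.ofReal (γ ^ N) * (C N ω : ℝ≥0∞) ∂μ :=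
          (lintegral_const_mul _ hCcast_meas).symm
      _ ≤ _ := lintegral_mono hpt
  refine lt_of_lt_of_le ?_ hint
  calc (1 : ℝ≥0∞) = ENNReal.ofReal (2 / 3) * ENNReal.ofReal (3 / 2) := by
        rw [← ENNReal.ofReal_mul (by norm_num)]; norm_num
    _ < ENNReal.ofReal (2 / 3) * (2 * μ (A N)) := by
        refine (ENNReal.mul_lt_mul_iff_right (by simp) ENNReal.ofReal_ne_top).2 ?_
        have : (2 : ℝ≥0∞) * ENNReal.ofReal (3 / 4) = ENNReal.ofReal (3 / 2) := by
          rw [← ENNReal.ofReal_ofNat 2, ← ENNReal.ofReal_mul (by norm_num)]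
          norm_num
        rw [← this]
        exact (ENNReal.mul_lt_mul_iff_right (by norm_num) (by norm_num)).2 hμN
    _ ≤ ENNReal.ofReal (γ ^ N) * (2 * μ (A N)) :=
        mul_le_mul_left (ENNReal.ofReal_le_ofReal h23) _
end

section
/- Let S be a finite type equipped with the discrete σ-algebra, and let κ_rev and κ_reach be Markov kernels from S to S. For a Markov kernel κ and an initial state s ∈ S, let P^κ_s denote the law of the time-homogeneous Markov chain (X_t)_{t ≥ 0} with X_0 = s and transition kernel κ, given by the Ionescu–Tulcea trajectory measure on S^ℕ. Let s_rec, s_new ∈ S. Suppose that P^{κ_rev}_{s_rec}-almost surely there exists t ≥ 1 with X_t = s_rec (κ_rev is a revisiting policy for s_rec), and that P^{κ_reach}_{s_new}-almost surely there exists t ≥ 1 with X_t = s_rec (κ_reach reaches s_rec from s_new with probability 1). Then there exists a Markov kernel κ from S to S with κ(s) = κ_rev(s) or κ(s) = κ_reach(s) for every s ∈ S, such that both P^κ_{s_rec}-almost surely there exists t ≥ 1 with X_t = s_rec, and P^κ_{s_new}-almost surely there exists t ≥ 1 with X_t = s_rec. -/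
open MeasureTheory ProbabilityTheory

/-- `P` is the law of the time-homogeneous Markov chain on the finite discrete state
space `S` with initial state `s` and transition kernel `κ` (the Ionescu–Tulcea
trajectory measure on `S^ℕ`), characterized by its finite-dimensional (cylinder)
distributions: the chain starts at `s` and transitions according to `κ`. -/
def IsTrajMeasure {S : Type*} [Fintype S] [DecidableEq S] [MeasurableSpace S]
    [MeasurableSingletonClass S] (κ : Kernel S S) (s : S)
    (P : Measure (ℕ → S)) : Prop :=
  IsProbabilityMeasure P ∧
    ∀ (n : ℕ) (f : ℕ → S),
      P {ω | ∀ i ≤ n, ω i = f i} =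
        (if f 0 = s then 1 else 0) * ∏ i ∈ Finset.range n, κ (f i) {f (i + 1)}

set_option linter.unusedSectionVars false
set_option maxHeartbeats 1000000
open Filter Finset

namespace RRV

variable {S : Type*} [Fintype S] [DecidableEq S] [MeasurableSpace S]
    [MeasurableSingletonClass S]

open Classical in
/-- probability of avoiding `p` at times `1..n` starting from `s`. -/
noncomputable def hitIter (κ : Kernel S S) (p : S → Prop) : ℕ → S → ENNReal
  | 0 => fun _ => 1
  | n+1 => fun s => ∑ t : S, if p t then 0 else κ s {t} * hitIter κ p n t

open Classical in
lemma hitIter_succ (κ : Kernel S S) (p : S → Prop) (n : ℕ) (s : S) :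
    hitIter κ p (n+1) s = ∑ t : S, if p t then 0 else κ s {t} * hitIter κ p n t := rfl

lemma sum_kernel (κ : Kernel S S) [IsMarkovKernel κ] (s : S) :
    ∑ t : S, κ s {t} = 1 := by
  have h : (Set.univ : Set S) = ⋃ t ∈ (Finset.univ : Finset S), {t} := by
    simp [Set.iUnion_of_singleton]
  have := measure_biUnion_finset (μ := κ s) (s := (Finset.univ : Finset S))
    (f := fun t => ({t} : Set S)) ?_ ?_
  · rw [← this, ← h, measure_univ]
  · intro a _ b _ hab
    simp [Set.disjoint_singleton, hab]
  · intro b _; exact measurableSet_singleton b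

lemma hitIter_le_one (κ : Kernel S S) [IsMarkovKernel κ] (p : S → Prop) (n : ℕ) (s : S) :
    hitIter κ p n s ≤ 1 := by
  classical
  induction n generalizing s with
  | zero => simp [hitIter]
  | succ n ih =>
    rw [hitIter_succ]
    calc ∑ t : S, (if p t then 0 else κ s {t} * hitIter κ p n t)
        ≤ ∑ t : S, κ s {t} := by
          refine Finset.sum_le_sum fun t _ => ?_
          split_ifs
          · exact zero_le
          · exact le_trans (mul_le_mul_right (ih t) _) (by simp)
      _ = 1 := sum_kernel κ s

lemma hitIter_antitone (κ : Kernel S S) [IsMarkovKernel κ] (p : S → Prop) (s : S) :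
    Antitone (fun n => hitIter κ p n s) := by
  classical
  have key : ∀ n s, hitIter κ p (n+1) s ≤ hitIter κ p n s := by
    intro n
    induction n with
    | zero => intro s; exact hitIter_le_one κ p 1 s
    | succ n ih =>
      intro s
      rw [hitIter_succ, hitIter_succ]
      refine Finset.sum_le_sum fun t _ => ?_
      split_ifs
      · exact le_rfl
      · exact mul_le_mul_right (ih t) _
  exact antitone_nat_of_succ_le (fun n => key n s)

/-- limit of `hitIter`: probability of never hitting `p` at time ≥ 1. -/
noncomputable def vlim (κ : Kernel S S) (p : S → Prop) (s : S) : ENNReal :=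
  ⨅ n, hitIter κ p n s

lemma vlim_le (κ : Kernel S S) (p : S → Prop) (n : ℕ) (s : S) :
    vlim κ p s ≤ hitIter κ p n s := iInf_le _ n

lemma tendsto_hitIter (κ : Kernel S S) [IsMarkovKernel κ] (p : S → Prop) (s : S) :
    Tendsto (fun n => hitIter κ p n s) atTop (nhds (vlim κ p s)) :=
  tendsto_atTop_iInf (hitIter_antitone κ p s)

open Classical in
lemma vlim_fixed (κ : Kernel S S) [IsMarkovKernel κ] (p : S → Prop) (s : S) :
    vlim κ p s = ∑ t : S, if p t then 0 else κ s {t} * vlim κ p t := by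
  have h1 : Tendsto (fun n => hitIter κ p (n+1) s) atTop (nhds (vlim κ p s)) :=
    (tendsto_add_atTop_iff_nat 1).2 (tendsto_hitIter κ p s)
  have h2 : Tendsto (fun n => ∑ t : S, if p t then 0 else κ s {t} * hitIter κ p n t)
      atTop (nhds (∑ t : S, if p t then 0 else κ s {t} * vlim κ p t)) := by
    refine tendsto_finset_sum _ fun t _ => ?_
    split_ifs
    · exact tendsto_const_nhds
    · exact ENNReal.Tendsto.const_mul (tendsto_hitIter κ p t)
        (Or.inr (measure_ne_top _ _))
  have : (fun n => hitIter κ p (n+1) s)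
      = fun n => ∑ t : S, if p t then 0 else κ s {t} * hitIter κ p n t := by
    funext n; exact hitIter_succ κ p n s
  rw [this] at h1
  exact tendsto_nhds_unique h1 h2

open Classical in
lemma vlim_zero_step (κ : Kernel S S) [IsMarkovKernel κ] (p : S → Prop) {s : S}
    (h : vlim κ p s = 0) (t : S) (ht : ¬ p t) :
    κ s {t} = 0 ∨ vlim κ p t = 0 := by
  rw [vlim_fixed] at h
  have := (Finset.sum_eq_zero_iff).1 h t (Finset.mem_univ t)
  rw [if_neg ht] at this
  exact mul_eq_zero.1 this

open Classical in
lemma hitIter_mono_pred (κ : Kernel S S) [IsMarkovKernel κ] {p q : S → Prop}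
    (hpq : ∀ t, p t → q t) (n : ℕ) (s : S) :
    hitIter κ q n s ≤ hitIter κ p n s := by
  induction n generalizing s with
  | zero => simp [hitIter]
  | succ n ih =>
    rw [hitIter_succ, hitIter_succ]
    refine Finset.sum_le_sum fun t _ => ?_
    by_cases hq : q t
    · simp [hq]
    · rw [if_neg hq, if_neg (fun hp => hq (hpq t hp))]
      exact mul_le_mul_right (ih t) _


variable {S : Type*} [Fintype S] [DecidableEq S] [MeasurableSpace S]
    [MeasurableSingletonClass S]

open Classical in
noncomputable def pathSum (κ : Kernel S S) (p : S → Prop) (n : ℕ) (s : S) : ENNReal :=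
  ∑ g : Fin (n+1) → S,
    if g 0 = s ∧ ∀ j : Fin (n+1), 1 ≤ (j : ℕ) → ¬ p (g j)
    then ∏ i : Fin n, κ (g i.castSucc) {g i.succ} else 0

open Classical in
lemma pathSum_zero (κ : Kernel S S) (p : S → Prop) (s : S) :
    pathSum κ p 0 s = 1 := by
  rw [pathSum]
  have h1 : ∀ g : Fin 1 → S, (∀ j : Fin 1, 1 ≤ (j : ℕ) → ¬ p (g j)) := by
    intro g j hj
    have := j.isLt; omega
  have h2 : (∑ g : Fin 1 → S,
      if g 0 = s ∧ ∀ j : Fin 1, 1 ≤ (j : ℕ) → ¬ p (g j)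
      then ∏ i : Fin 0, κ (g i.castSucc) {g i.succ} else 0)
      = ∑ g : Fin 1 → S, if g 0 = s then (1:ENNReal) else 0 := by
    refine Finset.sum_congr rfl fun g _ => ?_
    simp [h1 g]
  rw [h2, Fintype.sum_equiv (Equiv.funUnique (Fin 1) S) _
    (fun a => if a = s then (1:ENNReal) else 0) (fun g => by simp)]
  simp

open Classical in
lemma pathSum_succ (κ : Kernel S S) (p : S → Prop) (n : ℕ) (s : S) :
    pathSum κ p (n+1) s = ∑ t : S, if p t then 0 else κ s {t} * pathSum κ p n t := by
  classical
  set C : (Fin (n+1) → S) → Prop := fun t => ∀ j : Fin (n+1), ¬ p (t j) with hC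
  set Pr : (Fin (n+1) → S) → ENNReal := fun t => ∏ i : Fin n, κ (t i.castSucc) {t i.succ}
    with hPr
  have hL : pathSum κ p (n+1) s
      = ∑ t : Fin (n+1) → S, if C t then κ s {t 0} * Pr t else 0 := by
    rw [pathSum, ← Equiv.sum_comp (Fin.consEquiv (fun _ : Fin (n+2) => S)), Fintype.sum_prod_type]
    have step : ∀ a : S, ∑ t : Fin (n+1) → S,
        (if (Fin.cons a t : ∀ _ : Fin (n+2), S) 0 = s ∧
            (∀ j : Fin (n+2), 1 ≤ (j : ℕ) → ¬ p ((Fin.cons a t : ∀ _ : Fin (n+2), S) j))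
         then ∏ i : Fin (n+1), κ ((Fin.cons a t : ∀ _ : Fin (n+2), S) i.castSucc)
             {(Fin.cons a t : ∀ _ : Fin (n+2), S) i.succ} else 0)
        = ∑ t : Fin (n+1) → S, (if a = s ∧ C t then κ a {t 0} * Pr t else 0) := by
      intro a
      refine Finset.sum_congr rfl fun t _ => ?_
      have hiff : ((Fin.cons a t : ∀ _ : Fin (n+2), S) 0 = s ∧
          (∀ j : Fin (n+2), 1 ≤ (j : ℕ) → ¬ p ((Fin.cons a t : ∀ _ : Fin (n+2), S) j)))
          ↔ (a = s ∧ C t) := by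
        constructor
        · rintro ⟨h0, hall⟩
          refine ⟨h0, fun j => ?_⟩
          have := hall j.succ (by simp)
          simpa using this
        · rintro ⟨h0, hall⟩
          refine ⟨h0, fun j hj => ?_⟩
          induction j using Fin.cases with
          | zero => simp at hj
          | succ i => simpa using hall i
      have hprod : (∏ i : Fin (n+1), κ ((Fin.cons a t : ∀ _ : Fin (n+2), S) i.castSucc)
          {(Fin.cons a t : ∀ _ : Fin (n+2), S) i.succ}) = κ a {t 0} * Pr t := by
        rw [Fin.prod_univ_succ]
        congr 1
      rw [hprod]
      by_cases h : a = s ∧ C t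
      · rw [if_pos (hiff.2 h), if_pos h]
      · rw [if_neg (fun hh => h (hiff.1 hh)), if_neg h]
    calc (∑ a : S, ∑ t : Fin (n+1) → S,
          (if (Fin.cons a t : ∀ _ : Fin (n+2), S) 0 = s ∧
              (∀ j : Fin (n+2), 1 ≤ (j : ℕ) → ¬ p ((Fin.cons a t : ∀ _ : Fin (n+2), S) j))
           then ∏ i : Fin (n+1), κ ((Fin.cons a t : ∀ _ : Fin (n+2), S) i.castSucc)
               {(Fin.cons a t : ∀ _ : Fin (n+2), S) i.succ} else 0))
        = ∑ a : S, ∑ t : Fin (n+1) → S, (if a = s ∧ C t then κ a {t 0} * Pr t else 0) :=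
          Finset.sum_congr rfl fun a _ => step a
      _ = ∑ t : Fin (n+1) → S, ∑ a : S, (if a = s ∧ C t then κ a {t 0} * Pr t else 0) :=
          Finset.sum_comm
      _ = ∑ t : Fin (n+1) → S, if C t then κ s {t 0} * Pr t else 0 := by
          refine Finset.sum_congr rfl fun t _ => ?_
          by_cases hCt : C t
          · have hrw : ∀ a : S, (if a = s ∧ C t then κ a {t 0} * Pr t else 0)
                = if a = s then κ a {t 0} * Pr t else 0 := by
              intro a
              by_cases ha : a = s
              · rw [if_pos ⟨ha, hCt⟩, if_pos ha]
              · rw [if_neg (fun h => ha h.1), if_neg ha]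
            rw [Finset.sum_congr rfl fun a _ => hrw a,
              Finset.sum_ite_eq' Finset.univ s (fun a => κ a {t 0} * Pr t),
              if_pos (Finset.mem_univ s), if_pos hCt]
          · simp [hCt]
  have hR : (∑ t : S, if p t then 0 else κ s {t} * pathSum κ p n t)
      = ∑ t : Fin (n+1) → S, if C t then κ s {t 0} * Pr t else 0 := by
    have hone : ∀ t' : S, (if p t' then 0 else κ s {t'} * pathSum κ p n t')
        = ∑ t : Fin (n+1) → S,
            (if (¬ p t' ∧ t 0 = t' ∧ ∀ j : Fin (n+1), 1 ≤ (j : ℕ) → ¬ p (t j))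
             then κ s {t'} * Pr t else 0) := by
      intro t'
      by_cases hp : p t'
      · simp [hp]
      · rw [if_neg hp, pathSum, Finset.mul_sum]
        refine Finset.sum_congr rfl fun t _ => ?_
        by_cases h : t 0 = t' ∧ ∀ j : Fin (n+1), 1 ≤ (j : ℕ) → ¬ p (t j)
        · rw [if_pos h, if_pos ⟨hp, h⟩]
        · rw [if_neg h, if_neg (fun hh => h hh.2), mul_zero]
    rw [Finset.sum_congr rfl fun t' _ => hone t', Finset.sum_comm]
    refine Finset.sum_congr rfl fun t _ => ?_
    rw [Finset.sum_eq_single (t 0)]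
    · by_cases hCt : C t
      · rw [if_pos hCt, if_pos]
        exact ⟨hCt 0, rfl, fun j _ => hCt j⟩
      · rw [if_neg hCt, if_neg]
        rintro ⟨h0, -, hge⟩
        refine hCt fun j => ?_
        rcases Nat.eq_zero_or_pos (j : ℕ) with hj | hj
        · have : j = 0 := Fin.ext hj
          rw [this]; exact h0
        · exact hge j hj
    · intro b _ hb
      rw [if_neg]
      rintro ⟨-, h0, -⟩
      exact hb h0.symm
    · intro h; simp at h
  rw [hL, hR]


end RRV

namespace RRV
variable {S : Type*} [Fintype S] [DecidableEq S] [MeasurableSpace S]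
    [MeasurableSingletonClass S]

open Classical in
lemma pathSum_eq_hitIter (κ : Kernel S S) (p : S → Prop) (n : ℕ) (s : S) :
    pathSum κ p n s = hitIter κ p n s := by
  induction n generalizing s with
  | zero => rw [pathSum_zero]; rfl
  | succ n ih =>
    rw [pathSum_succ, hitIter_succ]
    exact Finset.sum_congr rfl fun t _ => by rw [ih t]

end RRV
namespace RRV
variable {S : Type*} [Fintype S] [DecidableEq S] [MeasurableSpace S]
    [MeasurableSingletonClass S]

lemma measurableSet_S (A : Set S) : MeasurableSet A := A.toFinite.measurableSet

def En (p : S → Prop) (n : ℕ) : Set (ℕ → S) := {ω | ∀ i, 1 ≤ i → i ≤ n → ¬ p (ω i)}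

lemma measurableSet_cyl (f : ℕ → S) (n : ℕ) :
    MeasurableSet {ω : ℕ → S | ∀ i ≤ n, ω i = f i} := by
  have h : {ω : ℕ → S | ∀ i ≤ n, ω i = f i}
      = ⋂ i ∈ Set.Iic n, (fun ω : ℕ → S => ω i) ⁻¹' {f i} := by
    ext ω; simp [Set.mem_iInter]
  rw [h]
  exact MeasurableSet.biInter (Set.to_countable _)
    (fun i _ => (measurable_pi_apply i) (measurableSet_singleton _))

lemma measurableSet_En (p : S → Prop) (n : ℕ) : MeasurableSet (En p n) := by
  have h : En p n = ⋂ i ∈ {i : ℕ | 1 ≤ i ∧ i ≤ n}, (fun ω : ℕ → S => ω i) ⁻¹' {t | ¬ p t} := by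
    ext ω; simp only [En, Set.mem_iInter, Set.mem_setOf_eq, Set.mem_preimage]; tauto
  rw [h]
  exact MeasurableSet.biInter (Set.to_countable _)
    (fun i _ => (measurable_pi_apply i) (measurableSet_S _))

/-- extension of a finite path to an infinite one -/
def extPath (n : ℕ) (g : Fin (n+1) → S) : ℕ → S :=
  fun i => g ⟨min i n, lt_of_le_of_lt (min_le_right i n) (Nat.lt_succ_self n)⟩

lemma extPath_eq (n : ℕ) (g : Fin (n+1) → S) (i : ℕ) (h : i ≤ n) :
    extPath n g i = g ⟨i, Nat.lt_succ_of_le h⟩ := by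
  unfold extPath
  exact congrArg g (Fin.ext (by simp [Nat.min_eq_left h]))

open Classical in
lemma measure_En (κ : Kernel S S) (s : S) (P : Measure (ℕ → S))
    (hP : IsTrajMeasure κ s P) (p : S → Prop) (n : ℕ) :
    P (En p n) = pathSum κ p n s := by
  classical
  set G : Finset (Fin (n+1) → S) :=
    Finset.univ.filter (fun g => ∀ j : Fin (n+1), 1 ≤ (j : ℕ) → ¬ p (g j)) with hG
  have hmemG : ∀ g : Fin (n+1) → S, g ∈ G ↔ (∀ j : Fin (n+1), 1 ≤ (j : ℕ) → ¬ p (g j)) := by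
    intro g; simp [hG]
  have hEn : En p n = ⋃ g ∈ G, {ω : ℕ → S | ∀ i ≤ n, ω i = extPath n g i} := by
    ext ω
    simp only [Set.mem_iUnion, exists_prop]
    constructor
    · intro hω
      refine ⟨fun j : Fin (n+1) => ω j, ?_, ?_⟩
      · rw [hmemG]
        intro j hj
        exact hω j hj (Nat.lt_succ_iff.1 j.isLt)
      · intro i hi
        rw [extPath_eq _ _ i hi]
    · rintro ⟨g, hg, hωg⟩
      intro i h1 h2
      have := hωg i h2
      rw [this, extPath_eq _ _ i h2]
      exact (hmemG g).1 hg ⟨i, Nat.lt_succ_of_le h2⟩ h1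
  have hdisj : (G : Set (Fin (n+1) → S)).PairwiseDisjoint
      (fun g => {ω : ℕ → S | ∀ i ≤ n, ω i = extPath n g i}) := by
    intro g _ g' _ hgg'
    refine Set.disjoint_left.2 fun ω hω hω' => hgg' ?_
    funext j
    have h1 := hω j (Nat.lt_succ_iff.1 j.isLt)
    have h2 := hω' j (Nat.lt_succ_iff.1 j.isLt)
    rw [extPath_eq _ _ j (Nat.lt_succ_iff.1 j.isLt)] at h1 h2
    have : g ⟨(j : ℕ), j.isLt⟩ = g' ⟨(j : ℕ), j.isLt⟩ := by rw [← h1, ← h2]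
    simpa using this
  rw [hEn, measure_biUnion_finset hdisj (fun g _ => measurableSet_cyl _ n)]
  -- now compute each cylinder probability and match with pathSum
  have hcyl : ∀ g : Fin (n+1) → S,
      P {ω : ℕ → S | ∀ i ≤ n, ω i = extPath n g i}
      = (if g 0 = s then 1 else 0) * ∏ i : Fin n, κ (g i.castSucc) {g i.succ} := by
    intro g
    rw [hP.2 n (extPath n g)]
    congr 1
    · rw [← Fin.prod_univ_eq_prod_range
        (fun i => κ (extPath n g i) {extPath n g (i + 1)}) n]
      refine Finset.prod_congr rfl fun i _ => ?_
      have hi : (i : ℕ) ≤ n := le_of_lt i.isLt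
      have hi1 : (i : ℕ) + 1 ≤ n := i.isLt
      rw [extPath_eq _ _ i hi, extPath_eq _ _ ((i : ℕ)+1) hi1]
      rfl
  rw [Finset.sum_congr rfl fun g _ => hcyl g, pathSum]
  rw [hG, Finset.sum_filter]
  refine Finset.sum_congr rfl fun g _ => ?_
  by_cases hc : ∀ j : Fin (n+1), 1 ≤ (j : ℕ) → ¬ p (g j)
  · rw [if_pos hc]
    by_cases h0 : g 0 = s
    · rw [if_pos h0, if_pos ⟨h0, hc⟩, one_mul]
    · rw [if_neg h0, if_neg (fun h => h0 h.1), zero_mul]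
  · rw [if_neg hc, if_neg (fun h => hc h.2)]

lemma measure_never (κ : Kernel S S) [IsMarkovKernel κ] (s : S) (P : Measure (ℕ → S))
    (hP : IsTrajMeasure κ s P) (p : S → Prop) :
    P {ω : ℕ → S | ∀ i, 1 ≤ i → ¬ p (ω i)} = vlim κ p s := by
  have := hP.1
  have hset : {ω : ℕ → S | ∀ i, 1 ≤ i → ¬ p (ω i)} = ⋂ m, En p m := by
    ext ω
    simp only [Set.mem_iInter, Set.mem_setOf_eq, En]
    exact ⟨fun h m i h1 _ => h i h1, fun h i h1 => h i i h1 le_rfl⟩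
  have hanti : Antitone (En p) := by
    intro m m' hmm' ω hω i h1 h2
    exact hω i h1 (le_trans h2 hmm')
  rw [hset, Directed.measure_iInter (fun m => (measurableSet_En p m).nullMeasurableSet)
    hanti.directed_ge ⟨0, measure_ne_top P _⟩]
  unfold vlim
  exact iInf_congr fun m => by rw [measure_En κ s P hP p m, pathSum_eq_hitIter]

end RRV
namespace RRV
variable {S : Type*} [Fintype S] [DecidableEq S] [MeasurableSpace S]
    [MeasurableSingletonClass S]

lemma measurable_from_S {β : Type*} [MeasurableSpace β] (f : S → β) : Measurable f :=
  fun _ _ => measurableSet_S _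

/-- index of a state -/
noncomputable def idx (a : S) : ℕ := ((Fintype.equivFin S) a : ℕ)

lemma idx_lt_card (a : S) : idx a < Fintype.card S := ((Fintype.equivFin S) a).isLt

lemma idx_injective : Function.Injective (idx (S := S)) := fun a b h =>
  (Fintype.equivFin S).injective (Fin.ext h)

/-- real transition probability -/
noncomputable def q (κ : Kernel S S) (s a : S) : ℝ := (κ s {a}).toReal

lemma q_nonneg (κ : Kernel S S) (s a : S) : 0 ≤ q κ s a := ENNReal.toReal_nonneg

/-- partial CDF -/
noncomputable def Gc (κ : Kernel S S) (s : S) (i : ℕ) : ℝ :=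
  ∑ a ∈ Finset.univ.filter (fun a => idx a < i), q κ s a

lemma Gc_zero (κ : Kernel S S) (s : S) : Gc κ s 0 = 0 := by
  simp [Gc]

lemma Gc_nonneg (κ : Kernel S S) (s : S) (i : ℕ) : 0 ≤ Gc κ s i :=
  Finset.sum_nonneg fun a _ => q_nonneg κ s a

lemma Gc_mono (κ : Kernel S S) (s : S) {i j : ℕ} (h : i ≤ j) : Gc κ s i ≤ Gc κ s j := by
  refine Finset.sum_le_sum_of_subset_of_nonneg ?_ (fun a _ _ => q_nonneg κ s a)
  intro a ha
  simp only [Finset.mem_filter, Finset.mem_univ, true_and] at ha ⊢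
  omega

lemma sum_q (κ : Kernel S S) [IsMarkovKernel κ] (s : S) : ∑ a : S, q κ s a = 1 := by
  have h := sum_kernel κ s
  have h2 : ∑ a : S, q κ s a = (∑ a : S, κ s {a}).toReal := by
    rw [ENNReal.toReal_sum fun a _ => measure_ne_top _ _]
    rfl
  rw [h2, h]; simp

lemma Gc_le_one (κ : Kernel S S) [IsMarkovKernel κ] (s : S) (i : ℕ) : Gc κ s i ≤ 1 := by
  rw [← sum_q κ s]
  exact Finset.sum_le_sum_of_subset_of_nonneg (Finset.filter_subset _ _)
    (fun a _ _ => q_nonneg κ s a)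

lemma Gc_card (κ : Kernel S S) [IsMarkovKernel κ] (s : S) :
    Gc κ s (Fintype.card S) = 1 := by
  rw [Gc]
  have : Finset.univ.filter (fun a : S => idx a < Fintype.card S) = Finset.univ := by
    ext a; simp [idx_lt_card]
  rw [this, sum_q]

lemma Gc_idx_succ (κ : Kernel S S) (s a : S) :
    Gc κ s (idx a + 1) = Gc κ s (idx a) + q κ s a := by
  have hsplit : Finset.univ.filter (fun b : S => idx b < idx a + 1)
      = insert a (Finset.univ.filter (fun b : S => idx b < idx a)) := by
    ext b
    simp only [Finset.mem_filter, Finset.mem_univ, true_and, Finset.mem_insert]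
    constructor
    · intro h
      rcases Nat.lt_succ_iff_lt_or_eq.1 h with h' | h'
      · exact Or.inr h'
      · exact Or.inl (idx_injective h')
    · rintro (rfl | h)
      · omega
      · omega
  rw [Gc, hsplit, Finset.sum_insert (by simp), Gc, add_comm]

open Classical in
/-- greatest index whose partial CDF is at most `y` -/
noncomputable def nxtIdx (κ : Kernel S S) (s : S) (y : ℝ) : ℕ :=
  Nat.findGreatest (fun i => Gc κ s i ≤ y) (Fintype.card S - 1)

/-- next state given current state `s` and uniform sample `y` -/
noncomputable def nxt (κ : Kernel S S) (s : S) (y : ℝ) : S :=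
  (Fintype.equivFin S).symm ⟨nxtIdx κ s y,
    lt_of_le_of_lt (Nat.findGreatest_le _)
      (Nat.sub_lt (Fintype.card_pos_iff.2 ⟨s⟩) one_pos)⟩

lemma idx_nxt (κ : Kernel S S) (s : S) (y : ℝ) : idx (nxt κ s y) = nxtIdx κ s y := by
  simp [idx, nxt]

lemma nxt_prop1 (κ : Kernel S S) (s : S) {y : ℝ} (h0 : 0 ≤ y) :
    Gc κ s (idx (nxt κ s y)) ≤ y := by
  classical
  rw [idx_nxt]
  exact Nat.findGreatest_spec (P := fun i => Gc κ s i ≤ y) (Nat.zero_le _)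
    (show Gc κ s 0 ≤ y by rw [Gc_zero]; exact h0)

lemma nxt_prop2 (κ : Kernel S S) [IsMarkovKernel κ] (s : S) {y : ℝ} (h1 : y < 1) :
    y < Gc κ s (idx (nxt κ s y) + 1) := by
  classical
  rw [idx_nxt]
  by_cases h : nxtIdx κ s y = Fintype.card S - 1
  · have hcard : 0 < Fintype.card S := Fintype.card_pos_iff.2 ⟨s⟩
    have : nxtIdx κ s y + 1 = Fintype.card S := by omega
    rw [this, Gc_card]; exact h1
  · have hle : nxtIdx κ s y + 1 ≤ Fintype.card S - 1 := by
      have := Nat.findGreatest_le (P := fun i => Gc κ s i ≤ y) (Fintype.card S - 1)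
      rw [nxtIdx] at h ⊢
      omega
    have := (Nat.findGreatest_eq_iff.1 (rfl :
      Nat.findGreatest (fun i => Gc κ s i ≤ y) (Fintype.card S - 1) = nxtIdx κ s y)).2.2
      (Nat.lt_succ_self _) hle
    exact not_le.1 this

lemma nxt_eq (κ : Kernel S S) (s a : S) {y : ℝ} (h1 : Gc κ s (idx a) ≤ y)
    (h2 : y < Gc κ s (idx a + 1)) : nxt κ s y = a := by
  classical
  have hcard : 0 < Fintype.card S := Fintype.card_pos_iff.2 ⟨s⟩
  have hle : idx a ≤ Fintype.card S - 1 := by have := idx_lt_card a; omega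
  have hge : idx a ≤ nxtIdx κ s y := Nat.le_findGreatest hle h1
  have hle2 : nxtIdx κ s y ≤ idx a := by
    by_contra hcon
    push_neg at hcon
    have hP : Gc κ s (nxtIdx κ s y) ≤ y :=
      Nat.findGreatest_spec (P := fun i => Gc κ s i ≤ y) (Nat.zero_le _)
        (show Gc κ s 0 ≤ y by rw [Gc_zero]; linarith [Gc_nonneg κ s (idx a), h1])
    have : Gc κ s (idx a + 1) ≤ Gc κ s (nxtIdx κ s y) := Gc_mono κ s hcon
    linarith
  have heq : nxtIdx κ s y = idx a := le_antisymm hle2 hge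
  rw [nxt]
  have hfin : (⟨nxtIdx κ s y, lt_of_le_of_lt (Nat.findGreatest_le _)
      (Nat.sub_lt (Fintype.card_pos_iff.2 ⟨s⟩) one_pos)⟩ : Fin (Fintype.card S))
      = Fintype.equivFin S a := Fin.ext (by rw [Fin.val_mk, heq]; rfl)
  rw [hfin]
  exact (Fintype.equivFin S).symm_apply_apply a

end RRV
namespace RRV
variable {S : Type*} [Fintype S] [DecidableEq S] [MeasurableSpace S]
    [MeasurableSingletonClass S]

open Classical in
lemma measurable_nxt (κ : Kernel S S) (c : S) : Measurable (fun y => nxt κ c y) := by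
  classical
  refine measurable_to_countable' fun a => ?_
  have hset : (fun y => nxt κ c y) ⁻¹' {a} = {y : ℝ | nxtIdx κ c y = idx a} := by
    ext y
    simp only [Set.mem_preimage, Set.mem_singleton_iff, Set.mem_setOf_eq]
    constructor
    · intro h; rw [← h, idx_nxt]
    · intro h
      rw [nxt]
      have hfin : (⟨nxtIdx κ c y, lt_of_le_of_lt (Nat.findGreatest_le _)
          (Nat.sub_lt (Fintype.card_pos_iff.2 ⟨c⟩) one_pos)⟩ : Fin (Fintype.card S))
          = Fintype.equivFin S a := Fin.ext (by rw [Fin.val_mk, h]; rfl)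
      rw [hfin]
      exact (Fintype.equivFin S).symm_apply_apply a
  rw [hset]
  have hset2 : {y : ℝ | nxtIdx κ c y = idx a}
      = {y : ℝ | idx a ≤ Fintype.card S - 1}
        ∩ ({y : ℝ | idx a ≠ 0 → Gc κ c (idx a) ≤ y}
          ∩ ⋂ m : ℕ, {y : ℝ | idx a < m → m ≤ Fintype.card S - 1 → ¬ (Gc κ c m ≤ y)}) := by
    ext y
    simp only [Set.mem_inter_iff, Set.mem_setOf_eq, Set.mem_iInter, nxtIdx]
    rw [Nat.findGreatest_eq_iff]
    try tauto
  rw [hset2]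
  refine (MeasurableSet.const _).inter (MeasurableSet.inter ?_ (MeasurableSet.iInter fun m => ?_))
  · by_cases h : idx a = 0
    · simp [h]
    · have : {y : ℝ | idx a ≠ 0 → Gc κ c (idx a) ≤ y} = Set.Ici (Gc κ c (idx a)) := by
        ext y; simp [h, Set.mem_Ici]
    
      rw [this]; exact measurableSet_Ici
  · by_cases h : idx a < m ∧ m ≤ Fintype.card S - 1
    · have : {y : ℝ | idx a < m → m ≤ Fintype.card S - 1 → ¬ (Gc κ c m ≤ y)}
          = Set.Iio (Gc κ c m) := by
        ext y; simp [h.1, h.2, Set.mem_Iio, not_le]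
      rw [this]; exact measurableSet_Iio
    · have : {y : ℝ | idx a < m → m ≤ Fintype.card S - 1 → ¬ (Gc κ c m ≤ y)} = Set.univ := by
        ext y
        simp only [Set.mem_setOf_eq, Set.mem_univ, iff_true]
        intro h1 h2
        exact absurd ⟨h1, h2⟩ h
      rw [this]; exact MeasurableSet.univ

/-- one simulation step -/
noncomputable def stepFun (κ : Kernel S S) : ((ℝ × ℝ) × ℝ) × S → S × ℝ × ℝ :=
  fun c =>
    let c' := nxt κ c.2 ((c.1.2 - c.1.1.1) / c.1.1.2)
    (c', c.1.1.1 + c.1.1.2 * Gc κ c.2 (idx c'), c.1.1.2 * q κ c.2 c')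

lemma measurable_stepFun (κ : Kernel S S) : Measurable (stepFun κ) := by
  refine measurable_from_prod_countable_left fun c => ?_
  have hy : Measurable (fun pr : (ℝ × ℝ) × ℝ => (pr.2 - pr.1.1) / pr.1.2) :=
    (measurable_snd.sub (measurable_fst.fst)).div measurable_fst.snd
  have hc' : Measurable (fun pr : (ℝ × ℝ) × ℝ => nxt κ c ((pr.2 - pr.1.1) / pr.1.2)) :=
    (measurable_nxt κ c).comp hy
  refine Measurable.prod hc' (Measurable.prod ?_ ?_)
  · exact measurable_fst.fst.add (measurable_fst.snd.mul
      ((measurable_from_S (fun u : S => Gc κ c (idx u))).comp hc'))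
  · exact measurable_fst.snd.mul
      ((measurable_from_S (fun u : S => q κ c u)).comp hc')

/-- trajectory simulation from a single uniform sample -/
noncomputable def trajSim (κ : Kernel S S) (s : S) (x : ℝ) : ℕ → S × ℝ × ℝ
  | 0 => (s, 0, 1)
  | n+1 => stepFun κ ((((trajSim κ s x n).2.1, (trajSim κ s x n).2.2), x), (trajSim κ s x n).1)

/-- the simulated chain -/
noncomputable def Xf (κ : Kernel S S) (s : S) (x : ℝ) (n : ℕ) : S := (trajSim κ s x n).1

lemma measurable_trajSim (κ : Kernel S S) (s : S) (n : ℕ) :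
    Measurable (fun x => trajSim κ s x n) := by
  induction n with
  | zero => exact measurable_const
  | succ n ih =>
    refine (measurable_stepFun κ).comp
      (Measurable.prod (Measurable.prod (Measurable.prod ?_ ?_) measurable_id) ?_)
    · exact measurable_fst.comp (measurable_snd.comp ih)
    · exact measurable_snd.comp (measurable_snd.comp ih)
    · exact measurable_fst.comp ih

lemma measurable_Xf (κ : Kernel S S) (s : S) (n : ℕ) : Measurable (fun x => Xf κ s x n) :=
  measurable_fst.comp (measurable_trajSim κ s n)

end RRV
namespace RRV
variable {S : Type*} [Fintype S] [DecidableEq S] [MeasurableSpace S]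
    [MeasurableSingletonClass S]

/-- weight of a finite path -/
noncomputable def wgt (κ : Kernel S S) (f : ℕ → S) : ℕ → ℝ
  | 0 => 1
  | n+1 => wgt κ f n * q κ (f n) (f (n+1))

/-- left endpoint of the interval of a finite path -/
noncomputable def lep (κ : Kernel S S) (f : ℕ → S) : ℕ → ℝ
  | 0 => 0
  | n+1 => lep κ f n + wgt κ f n * Gc κ (f n) (idx (f (n+1)))

lemma wgt_nonneg (κ : Kernel S S) (f : ℕ → S) (n : ℕ) : 0 ≤ wgt κ f n := by
  induction n with
  | zero => norm_num [wgt]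
  | succ n ih => exact mul_nonneg ih (q_nonneg _ _ _)

lemma lep_nonneg (κ : Kernel S S) (f : ℕ → S) (n : ℕ) : 0 ≤ lep κ f n := by
  induction n with
  | zero => norm_num [lep]
  | succ n ih =>
    have := mul_nonneg (wgt_nonneg κ f n) (Gc_nonneg κ (f n) (idx (f (n+1))))
    unfold lep; linarith

lemma lep_add_wgt_le_one (κ : Kernel S S) [IsMarkovKernel κ] (f : ℕ → S) (n : ℕ) :
    lep κ f n + wgt κ f n ≤ 1 := by
  induction n with
  | zero => norm_num [lep, wgt]
  | succ n ih =>
    have h1 : Gc κ (f n) (idx (f (n+1))) + q κ (f n) (f (n+1))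
        = Gc κ (f n) (idx (f (n+1)) + 1) := (Gc_idx_succ κ (f n) (f (n+1))).symm
    have h2 : Gc κ (f n) (idx (f (n+1)) + 1) ≤ 1 := Gc_le_one κ (f n) _
    have h3 : wgt κ f n * (Gc κ (f n) (idx (f (n+1))) + q κ (f n) (f (n+1))) ≤ wgt κ f n := by
      rw [h1]
      calc wgt κ f n * Gc κ (f n) (idx (f (n+1)) + 1) ≤ wgt κ f n * 1 :=
            mul_le_mul_of_nonneg_left h2 (wgt_nonneg κ f n)
        _ = wgt κ f n := mul_one _
    show lep κ f n + wgt κ f n * Gc κ (f n) (idx (f (n+1)))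
        + wgt κ f n * q κ (f n) (f (n+1)) ≤ 1
    nlinarith [wgt_nonneg κ f n]

lemma trajSim_eq (κ : Kernel S S) [IsMarkovKernel κ] (s : S) (f : ℕ → S) (hf0 : f 0 = s)
    {x : ℝ} (hx0 : 0 ≤ x) (hx1 : x < 1) :
    ∀ n, (∀ i ≤ n, Xf κ s x i = f i) →
      trajSim κ s x n = (f n, lep κ f n, wgt κ f n)
        ∧ lep κ f n ≤ x ∧ x < lep κ f n + wgt κ f n := by
  intro n
  induction n with
  | zero =>
    intro _
    refine ⟨?_, by norm_num [lep]; exact hx0, by norm_num [lep, wgt]; exact hx1⟩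
    show (s, (0:ℝ), (1:ℝ)) = (f 0, lep κ f 0, wgt κ f 0)
    rw [hf0]; norm_num [lep, wgt]
  | succ n ih =>
    intro hm
    obtain ⟨htraj, hxl, hxr⟩ := ih (fun i hi => hm i (le_trans hi (Nat.le_succ n)))
    set w := wgt κ f n with hw
    set L := lep κ f n with hL
    have hwpos : 0 < w := by linarith
    set y := (x - L) / w with hy
    have hy0 : 0 ≤ y := div_nonneg (by linarith) (le_of_lt hwpos)
    have hy1 : y < 1 := (div_lt_one hwpos).2 (by linarith)
    have hstep : trajSim κ s x (n+1)
        = (nxt κ (f n) y, L + w * Gc κ (f n) (idx (nxt κ (f n) y)),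
            w * q κ (f n) (nxt κ (f n) y)) := by
      show stepFun κ ((((trajSim κ s x n).2.1, (trajSim κ s x n).2.2), x),
        (trajSim κ s x n).1) = _
      rw [htraj]
      rfl
    have hXf : Xf κ s x (n+1) = nxt κ (f n) y := by
      rw [Xf, hstep]
    have hc' : nxt κ (f n) y = f (n+1) := by
      rw [← hXf]; exact hm (n+1) le_rfl
    have h1 := nxt_prop1 κ (f n) hy0
    have h2 := nxt_prop2 κ (f n) hy1
    rw [hc'] at h1 h2 hstep
    have hGq : Gc κ (f n) (idx (f (n+1)) + 1)
        = Gc κ (f n) (idx (f (n+1))) + q κ (f n) (f (n+1)) := Gc_idx_succ κ (f n) (f (n+1))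
    constructor
    · rw [hstep]
      show _ = (f (n+1), L + w * Gc κ (f n) (idx (f (n+1))), w * q κ (f n) (f (n+1)))
      rfl
    constructor
    · show L + w * Gc κ (f n) (idx (f (n+1))) ≤ x
      have h1' : Gc κ (f n) (idx (f (n+1))) * w ≤ x - L := by
        have := mul_le_mul_of_nonneg_right h1 (le_of_lt hwpos)
        rwa [hy, div_mul_cancel₀ _ (ne_of_gt hwpos)] at this
      linarith [h1']
    · show x < L + w * Gc κ (f n) (idx (f (n+1))) + w * q κ (f n) (f (n+1))
      have h2' : x - L < Gc κ (f n) (idx (f (n+1)) + 1) * w := by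
        have := mul_lt_mul_of_pos_right h2 hwpos
        rwa [hy, div_mul_cancel₀ _ (ne_of_gt hwpos)] at this
      rw [hGq] at h2'
      nlinarith

lemma interval_imp (κ : Kernel S S) [IsMarkovKernel κ] (s : S) (f : ℕ → S) (hf0 : f 0 = s)
    {x : ℝ} (hx0 : 0 ≤ x) (hx1 : x < 1) :
    ∀ n, lep κ f n ≤ x → x < lep κ f n + wgt κ f n → ∀ i ≤ n, Xf κ s x i = f i := by
  intro n
  induction n with
  | zero =>
    intro _ _ i hi
    interval_cases i
    show (trajSim κ s x 0).1 = f 0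
    rw [hf0]; rfl
  | succ n ih =>
    intro hl hr
    have hw1pos : 0 < wgt κ f (n+1) := by linarith
    have hwpos : 0 < wgt κ f n := by
      rcases lt_or_ge 0 (wgt κ f n) with h | h
      · exact h
      · exfalso
        have : wgt κ f (n+1) = wgt κ f n * q κ (f n) (f (n+1)) := rfl
        nlinarith [q_nonneg κ (f n) (f (n+1)), wgt_nonneg κ f n]
    have hqpos : 0 < q κ (f n) (f (n+1)) := by
      have : wgt κ f (n+1) = wgt κ f n * q κ (f n) (f (n+1)) := rfl
      nlinarith [q_nonneg κ (f n) (f (n+1))]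
    have hGnn := Gc_nonneg κ (f n) (idx (f (n+1)))
    have hGq : Gc κ (f n) (idx (f (n+1)) + 1)
        = Gc κ (f n) (idx (f (n+1))) + q κ (f n) (f (n+1)) := Gc_idx_succ κ (f n) (f (n+1))
    have hG1 : Gc κ (f n) (idx (f (n+1)) + 1) ≤ 1 := Gc_le_one κ (f n) _
    have hlep1 : lep κ f (n+1) = lep κ f n + wgt κ f n * Gc κ (f n) (idx (f (n+1))) := rfl
    have hwgt1 : wgt κ f (n+1) = wgt κ f n * q κ (f n) (f (n+1)) := rfl
    have hl' : lep κ f n ≤ x := by nlinarith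
    have hr' : x < lep κ f n + wgt κ f n := by nlinarith
    have hmatch := ih hl' hr'
    obtain ⟨htraj, -, -⟩ := trajSim_eq κ s f hf0 hx0 hx1 n hmatch
    intro i hi
    rcases Nat.lt_succ_iff_lt_or_eq.1 (Nat.lt_succ_of_le hi) with h | rfl
    · exact hmatch i (Nat.lt_succ_iff.1 h)
    · -- i = n+1
      set L := lep κ f n
      set w := wgt κ f n
      set y := (x - L) / w with hy
      have hXf : Xf κ s x (n+1) = nxt κ (f n) y := by
        show (stepFun κ ((((trajSim κ s x n).2.1, (trajSim κ s x n).2.2), x),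
          (trajSim κ s x n).1)).1 = _
        rw [htraj]
        rfl
      rw [hXf]
      refine nxt_eq κ (f n) (f (n+1)) ?_ ?_
      · rw [hy, le_div_iff₀ hwpos]
        nlinarith
      · rw [hy, div_lt_iff₀ hwpos, hGq]
        nlinarith

end RRV
namespace RRV
variable {S : Type*} [Fintype S] [DecidableEq S] [MeasurableSpace S]
    [MeasurableSingletonClass S]

/-- the trajectory measure, as a pushforward of Lebesgue measure on `[0,1)` -/
noncomputable def trajMeasure (κ : Kernel S S) (s : S) : Measure (ℕ → S) :=
  Measure.map (fun x (n : ℕ) => Xf κ s x n) (volume.restrict (Set.Ico (0:ℝ) 1))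

lemma measurable_XfFun (κ : Kernel S S) (s : S) :
    Measurable (fun x (n : ℕ) => Xf κ s x n) :=
  measurable_pi_lambda _ (fun n => measurable_Xf κ s n)

lemma wgt_eq_prod (κ : Kernel S S) [IsMarkovKernel κ] (f : ℕ → S) (n : ℕ) :
    ENNReal.ofReal (wgt κ f n) = ∏ i ∈ Finset.range n, κ (f i) {f (i+1)} := by
  induction n with
  | zero => simp [wgt]
  | succ n ih =>
    rw [Finset.prod_range_succ, ← ih]
    show ENNReal.ofReal (wgt κ f n * q κ (f n) (f (n+1))) = _
    rw [ENNReal.ofReal_mul (wgt_nonneg κ f n)]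
    congr 1
    exact ENNReal.ofReal_toReal (measure_ne_top _ _)

theorem isTrajMeasure_trajMeasure (κ : Kernel S S) [IsMarkovKernel κ] (s : S) :
    IsTrajMeasure κ s (trajMeasure κ s) := by
  have hprob : IsProbabilityMeasure (volume.restrict (Set.Ico (0:ℝ) 1)) := by
    constructor
    rw [Measure.restrict_apply_univ, Real.volume_Ico]
    norm_num
  constructor
  · exact Measure.isProbabilityMeasure_map (measurable_XfFun κ s).aemeasurable
  · intro n f
    rw [trajMeasure, Measure.map_apply (measurable_XfFun κ s) (measurableSet_cyl f n),
      Measure.restrict_apply ((measurable_XfFun κ s) (measurableSet_cyl f n))]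
    by_cases hf0 : f 0 = s
    · have hset : (fun x (m : ℕ) => Xf κ s x m) ⁻¹' {ω | ∀ i ≤ n, ω i = f i}
          ∩ Set.Ico (0:ℝ) 1 = Set.Ico (lep κ f n) (lep κ f n + wgt κ f n) := by
        ext x
        constructor
        · rintro ⟨hpre, hx⟩
          obtain ⟨-, h1, h2⟩ := trajSim_eq κ s f hf0 hx.1 hx.2 n hpre
          exact ⟨h1, h2⟩
        · intro hxI
          have hx0 : (0:ℝ) ≤ x := le_trans (lep_nonneg κ f n) hxI.1
          have hx1 : x < 1 := lt_of_lt_of_le hxI.2 (lep_add_wgt_le_one κ f n)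
          exact ⟨interval_imp κ s f hf0 hx0 hx1 n hxI.1 hxI.2, hx0, hx1⟩
      rw [hset, Real.volume_Ico, add_sub_cancel_left, if_pos hf0, one_mul]
      exact wgt_eq_prod κ f n
    · have hset : (fun x (m : ℕ) => Xf κ s x m) ⁻¹' {ω | ∀ i ≤ n, ω i = f i}
          ∩ Set.Ico (0:ℝ) 1 = ∅ := by
        ext x
        simp only [Set.mem_inter_iff, Set.mem_preimage, Set.mem_setOf_eq,
          Set.mem_empty_iff_false, iff_false, not_and]
        intro hpre _
        exact hf0 (by rw [← hpre 0 (Nat.zero_le n)]; rfl)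
      rw [hset, if_neg hf0, zero_mul]
      simp

theorem exists_trajMeasure (κ : Kernel S S) [IsMarkovKernel κ] (s : S) :
    ∃ P : Measure (ℕ → S), IsTrajMeasure κ s P :=
  ⟨trajMeasure κ s, isTrajMeasure_trajMeasure κ s⟩

end RRV


open RRV

/-- A reach-and-revisit policy exists: if `κ_rev` revisits `s_rec` almost surely
(started at `s_rec`) and `κ_reach` reaches `s_rec` almost surely from `s_new`, then
there is a kernel `κ`, agreeing at each state with `κ_rev` or with `κ_reach`, whose
chain from `s_rec` revisits `s_rec` almost surely and whose chain from `s_new`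
reaches `s_rec` almost surely. -/
theorem exists_reach_and_revisit_kernel {S : Type*} [Fintype S] [DecidableEq S]
    [MeasurableSpace S] [MeasurableSingletonClass S]
    (κrev κreach : Kernel S S) [IsMarkovKernel κrev] [IsMarkovKernel κreach]
    (s_rec s_new : S)
    (hrev : ∀ P : Measure (ℕ → S), IsTrajMeasure κrev s_rec P →
      ∀ᵐ ω ∂P, ∃ t ≥ 1, ω t = s_rec)
    (hreach : ∀ P : Measure (ℕ → S), IsTrajMeasure κreach s_new P →
      ∀ᵐ ω ∂P, ∃ t ≥ 1, ω t = s_rec) :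
    ∃ κ : Kernel S S, (∀ s : S, κ s = κrev s ∨ κ s = κreach s) ∧
      (∀ P : Measure (ℕ → S), IsTrajMeasure κ s_rec P →
        ∀ᵐ ω ∂P, ∃ t ≥ 1, ω t = s_rec) ∧
      (∀ P : Measure (ℕ → S), IsTrajMeasure κ s_new P →
        ∀ᵐ ω ∂P, ∃ t ≥ 1, ω t = s_rec) := by
  classical
  set p : S → Prop := fun t => t = s_rec with hp
  -- extract `vlim = 0` facts from the hypotheses via the trajectory measures
  have hnever : ∀ (κ' : Kernel S S) [IsMarkovKernel κ'] (s : S) (P : Measure (ℕ → S)),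
      IsTrajMeasure κ' s P → (∀ᵐ ω ∂P, ∃ t ≥ 1, ω t = s_rec) → vlim κ' p s = 0 := by
    intro κ' _ s P hP hae
    rw [ae_iff] at hae
    have hsub : {ω : ℕ → S | ¬ ∃ t ≥ 1, ω t = s_rec} = {ω | ∀ i, 1 ≤ i → ¬ p (ω i)} := by
      ext ω; push_neg; rfl
    rw [hsub] at hae
    rw [← measure_never κ' s P hP p, hae]
  obtain ⟨Prev, hPrev⟩ := exists_trajMeasure κrev s_rec
  have hvrev : vlim κrev p s_rec = 0 := hnever κrev s_rec Prev hPrev (hrev Prev hPrev)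
  obtain ⟨Preach, hPreach⟩ := exists_trajMeasure κreach s_new
  have hvreach : vlim κreach p s_new = 0 :=
    hnever κreach s_new Preach hPreach (hreach Preach hPreach)
  -- the reach-and-revisit kernel
  set A : Set S := {t | vlim κrev p t = 0} with hA
  have hAm : MeasurableSet A := measurableSet_S A
  set κ : Kernel S S := Kernel.piecewise hAm κrev κreach with hκ
  haveI : IsMarkovKernel κ := by rw [hκ]; infer_instance
  have hκA : ∀ s ∈ A, κ s = κrev s := by
    intro s hs; rw [hκ, Kernel.piecewise_apply, if_pos hs]
  have hκnA : ∀ s ∉ A, κ s = κreach s := by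
    intro s hs; rw [hκ, Kernel.piecewise_apply, if_neg hs]
  have hagree : ∀ s : S, κ s = κrev s ∨ κ s = κreach s := by
    intro s
    by_cases hs : s ∈ A
    · exact Or.inl (hκA s hs)
    · exact Or.inr (hκnA s hs)
  -- claim 1 : on A the chain behaves like κrev
  have claim1 : ∀ n (s : S), vlim κrev p s = 0 → hitIter κ p n s = hitIter κrev p n s := by
    intro n
    induction n with
    | zero => intro s _; rfl
    | succ n ih =>
      intro s hs
      rw [hitIter_succ, hitIter_succ]
      refine Finset.sum_congr rfl fun t _ => ?_
      by_cases hpt : p t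
      · rw [if_pos hpt, if_pos hpt]
      · rw [if_neg hpt, if_neg hpt, hκA s hs]
        rcases vlim_zero_step κrev p hs t hpt with h | h
        · rw [h, zero_mul, zero_mul]
        · rw [ih t h]
  have hvlimA : ∀ s : S, vlim κrev p s = 0 → vlim κ p s = 0 := by
    intro s hs
    have : vlim κ p s = vlim κrev p s := iInf_congr fun n => claim1 n s hs
    rw [this, hs]
  have vκrec : vlim κ p s_rec = 0 := hvlimA s_rec hvrev
  -- claim 2 : outside A the chain behaves like κreach until it enters A
  have claim2 : ∀ n (s : S), vlim κ p s ≤ hitIter κreach (fun t => vlim κrev p t = 0) n s := by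
    intro n
    induction n with
    | zero =>
      intro s
      exact le_trans (vlim_le κ p 0 s) le_rfl
    | succ n ih =>
      intro s
      by_cases hsA : vlim κrev p s = 0
      · rw [hvlimA s hsA]; exact zero_le
      · rw [vlim_fixed κ p s, hitIter_succ]
        refine Finset.sum_le_sum fun t _ => ?_
        by_cases htA : vlim κrev p t = 0
        · rw [if_pos htA]
          by_cases hpt : p t
          · rw [if_pos hpt]
          · rw [if_neg hpt, hvlimA t htA, mul_zero]
        · have hpt : ¬ p t := fun hpt => htA (by rw [hp] at hpt; rw [hpt]; exact hvrev)
          rw [if_neg hpt, if_neg htA, hκnA s hsA]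
          exact mul_le_mul_right (ih t) _
  have vκnew : vlim κ p s_new = 0 := by
    by_cases h : vlim κrev p s_new = 0
    · exact hvlimA s_new h
    · have hle : ∀ n, vlim κ p s_new ≤ hitIter κreach p n s_new := fun n =>
        le_trans (claim2 n s_new)
          (hitIter_mono_pred κreach (fun t ht => by rw [hp] at ht; rw [ht]; exact hvrev)
            n s_new)
      have : vlim κ p s_new ≤ vlim κreach p s_new := le_iInf fun n => hle n
      rw [hvreach] at this
      exact le_antisymm this zero_le
  -- conclusion
  have concl : ∀ s : S, vlim κ p s = 0 → ∀ P : Measure (ℕ → S), IsTrajMeasure κ s P →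
      ∀ᵐ ω ∂P, ∃ t ≥ 1, ω t = s_rec := by
    intro s hv P hP
    rw [ae_iff]
    have hsub : {ω : ℕ → S | ¬ ∃ t ≥ 1, ω t = s_rec} = {ω | ∀ i, 1 ≤ i → ¬ p (ω i)} := by
      ext ω; push_neg; rfl
    rw [hsub, measure_never κ s P hP p, hv]
  exact ⟨κ, hagree, concl s_rec vκrec, concl s_new vκnew⟩
end
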